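/- Let i, j > 0 with i + j = 1. If there exists a compact subset Ω of Bad(i,j) ⊆ ℝ² which supports a non-atomic finite measure m satisfying condition (A) with exponent δ > 1, then dim(Bad(i,j) ∩ Bad(1/2,1/2)) ≥ δ; in particular Bad(i,j) ∩ Bad(1/2,1/2) ≠ ∅. -/

import Mathlib

open scoped ENNReal
open MeasureTheory Metric

/-- The distance from a real number to the nearest integer. -/
noncomputable def distToNearestInt (y : ℝ) : ℝ := |y - (round y : ℝ)|

/-- For weights `i, j ≥ 0` with `i + j = 1`, the set `Bad(i,j)` of pairs
`(x₁, x₂) ∈ ℝ²` for which there exists `c > 0` such that for every integer `q ≥ 1` one has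
`max{‖q x₁‖^(1/i), ‖q x₂‖^(1/j)} > c / q`, the maximum being taken over the components with
positive weight (a component with weight `0` imposes no condition). -/
def badPair (i j : ℝ) : Set (Fin 2 → ℝ) :=
  {x | ∃ c : ℝ, 0 < c ∧ ∀ q : ℕ, 0 < q →
    (0 < i ∧ c / (q : ℝ) < distToNearestInt ((q : ℝ) * x 0) ^ (1 / i)) ∨
    (0 < j ∧ c / (q : ℝ) < distToNearestInt ((q : ℝ) * x 1) ^ (1 / j))}

/-!
Inside `Ω` we build a Cantor set at scales `ρ₀ R^(-n)`: each point of generation `n` gets about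
`(a / b) (R / 12)^δ` children, `6 ρ₀ R^(-n-1)`-separated, found by a maximal packing and the two
bounds of condition (A). A child is discarded when it comes too close to a rational point `p / q`
whose forbidden radius `κ q^(-3/2)` is of the size of the next generation. By Davenport's simplex
lemma these rational points are collinear, so only `O(R)` children are discarded, and `≈ R^s`
survive for any `s < δ`. The limit points stay in `Ω ⊆ Bad(i,j)`, keep distance `κ q^(-3/2)` from
every `p / q`, hence lie in `Bad(1/2,1/2)`, and form a set of dimension at least `s`.
-/

open Set Function Filter Topology
open scoped NNReal

theorem HolderOnWith.of_dist_le {X Y : Type*} [PseudoMetricSpace X] [PseudoMetricSpace Y]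
    {C r : ℝ≥0} {f : X → Y} {s : Set X}
    (h : ∀ x ∈ s, ∀ y ∈ s, dist (f x) (f y) ≤ C * dist x y ^ (r : ℝ)) :
    HolderOnWith C r f s := by
  intro x hx y hy
  rw [edist_dist, edist_dist, ENNReal.ofReal_rpow_of_nonneg dist_nonneg r.coe_nonneg,
    ← ENNReal.ofReal_coe_nnreal, ← ENNReal.ofReal_mul C.coe_nonneg]
  exact ENNReal.ofReal_le_ofReal (h x hx y hy)

theorem exists_forall_lt_eq_and_ne {α : Type*} {ω ω' : ℕ → α} (h : ω ≠ ω') :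
    ∃ n, (∀ k < n, ω k = ω' k) ∧ ω n ≠ ω' n := by
  classical
  have h' : ∃ n, ω n ≠ ω' n := Function.ne_iff.1 h
  exact ⟨Nat.find h', fun k hk => not_not.1 (Nat.find_min h' hk), Nat.find_spec h'⟩

theorem abs_ofDigits_sub_le {X : Type*} [PseudoMetricSpace X] {N : ℕ} {R c s : ℝ} (hR : 1 < R)
    (hc : 0 < c) (hs : 0 ≤ s) (hN : R ^ s ≤ N) {g : (ℕ → Fin N) → X}
    (hg : ∀ ω ω' n, (∀ k < n, ω k = ω' k) → ω n ≠ ω' n → c / R ^ n ≤ dist (g ω) (g ω'))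
    (ω ω' : ℕ → Fin N) :
    |Real.ofDigits ω - Real.ofDigits ω'| ≤ c⁻¹ ^ s * dist (g ω) (g ω') ^ s := by
  rcases eq_or_ne ω ω' with rfl | hne
  · rw [sub_self, abs_zero]
    positivity
  obtain ⟨n, hagree, hn⟩ := exists_forall_lt_eq_and_ne hne
  have hR0 : 0 < R := zero_lt_one.trans hR
  calc |Real.ofDigits ω - Real.ofDigits ω'| ≤ ((N : ℝ) ^ n)⁻¹ :=
        Real.abs_ofDigits_sub_ofDigits_le hagree
    _ ≤ ((R ^ s) ^ n)⁻¹ := by gcongr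
    _ = (c⁻¹ * (c / R ^ n)) ^ s := by
        rw [div_eq_mul_inv, inv_mul_cancel_left₀ hc.ne', Real.inv_rpow (by positivity),
          ← Real.rpow_natCast, ← Real.rpow_natCast R n, ← Real.rpow_mul hR0.le,
          ← Real.rpow_mul hR0.le, mul_comm]
    _ ≤ (c⁻¹ * dist (g ω) (g ω')) ^ s := by gcongr; exact hg ω ω' n hagree hn
    _ = c⁻¹ ^ s * dist (g ω) (g ω') ^ s := Real.mul_rpow (by positivity) dist_nonneg

/-- Sending `g ω` to the base-`N` number `0.ω₀ω₁ω₂…` is `s`-Hölder on `range g` and maps it onto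
`[0, 1]`, whose dimension is `1`. -/
theorem le_dimH_range_of_le_dist {X : Type*} [MetricSpace X] {N : ℕ} {R c s : ℝ}
    (hR : 1 < R) (hc : 0 < c) (hs : 0 < s) (hN : R ^ s ≤ N) {g : (ℕ → Fin N) → X}
    (hg : ∀ ω ω' n, (∀ k < n, ω k = ω' k) → ω n ≠ ω' n → c / R ^ n ≤ dist (g ω) (g ω')) :
    ENNReal.ofReal s ≤ dimH (range g) := by
  have hN1 : 1 < N := by exact_mod_cast (Real.one_lt_rpow hR hs).trans_le hN
  have : Nonempty (Fin N) := ⟨⟨0, by omega⟩⟩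
  have hinj : Injective g := fun ω ω' hgω => by
    by_contra hne
    obtain ⟨n, hagree, hn⟩ := exists_forall_lt_eq_and_ne hne
    have := hg ω ω' n hagree hn
    rw [hgω, dist_self] at this
    exact (div_pos hc (pow_pos (zero_lt_one.trans hR) n)).not_ge this
  set φ : X → ℝ := Real.ofDigits ∘ invFun g
  have hφ : ∀ ω, φ (g ω) = Real.ofDigits ω := fun ω => by
    simp only [φ, comp_apply, leftInverse_invFun hinj ω]
  have hholder : HolderOnWith (c⁻¹ ^ s).toNNReal s.toNNReal φ (range g) := by
    refine HolderOnWith.of_dist_le ?_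
    rintro _ ⟨ω, rfl⟩ _ ⟨ω', rfl⟩
    rw [hφ, hφ, Real.dist_eq, Real.coe_toNNReal _ (by positivity), Real.coe_toNNReal _ hs.le]
    exact abs_ofDigits_sub_le hR hc hs.le hN hg ω ω'
  have himage : Icc (0 : ℝ) 1 ⊆ φ '' range g := by
    intro u hu
    obtain ⟨ω, -, rfl⟩ := Real.ofDigits_SurjOn hN1 hu
    exact ⟨g ω, mem_range_self ω, hφ ω⟩
  have hIcc : dimH (Icc (0 : ℝ) 1) = 1 := by
    rw [Real.dimH_of_nonempty_interior (by simp), Module.finrank_self, Nat.cast_one]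
  have := (hIcc.symm.le.trans (dimH_mono himage)).trans
    (hholder.dimH_image_le (Real.toNNReal_pos.2 hs))
  rwa [ENNReal.le_div_iff_mul_le (by simp [hs]) (by simp), one_mul] at this

theorem exists_tendsto_of_dist_succ_le {X : Type*} [MetricSpace X] [CompleteSpace X]
    {u : ℕ → X} {ρ₀ R : ℝ} (hR : 2 ≤ R) (hu : ∀ n, dist (u n) (u (n + 1)) ≤ ρ₀ / R ^ n / 2) :
    ∃ x, Tendsto u atTop (𝓝 x) ∧ ∀ n, dist (u n) x ≤ ρ₀ / R ^ n := by
  have hR0 : 0 < R := by linarith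
  have hρ₀ : 0 ≤ ρ₀ := by
    have := dist_nonneg.trans (hu 0)
    rw [pow_zero, div_one] at this
    linarith
  have hr : R⁻¹ < 1 := inv_lt_one_of_one_lt₀ (by linarith)
  have hu' : ∀ n, dist (u n) (u (n + 1)) ≤ ρ₀ / 2 * R⁻¹ ^ n := fun n =>
    (hu n).trans_eq (by rw [inv_pow]; ring)
  obtain ⟨x, hx⟩ := cauchySeq_tendsto_of_complete (cauchySeq_of_le_geometric _ _ hr hu')
  refine ⟨x, hx, fun n => (dist_le_of_le_geometric_of_tendsto _ _ hr hu' hx n).trans ?_⟩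
  have : 1 / 2 ≤ 1 - R⁻¹ := by
    rw [le_sub_comm, ← one_div]; linarith [one_div_le_one_div_of_le zero_lt_two hR]
  rw [div_le_iff₀ (by linarith)]
  calc ρ₀ / 2 * R⁻¹ ^ n = ρ₀ / R ^ n * (1 / 2) := by rw [inv_pow]; ring
    _ ≤ ρ₀ / R ^ n * (1 - R⁻¹) := by gcongr

theorem exists_cantor_scheme {X : Type*} [MetricSpace X] [CompleteSpace X] {Ω : Set X}
    (hΩ : IsClosed Ω) (hne : Ω.Nonempty) {ρ₀ R : ℝ} (hR : 2 ≤ R) {N : ℕ} (good : ℕ → X → Prop)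
    (hchildren : ∀ n, ∀ c ∈ Ω, ∃ S : Finset X, N ≤ S.card ∧
      (S : Set X).Pairwise (fun y z => 3 * (ρ₀ / R ^ (n + 1)) ≤ dist y z) ∧
      ∀ y ∈ S, y ∈ Ω ∧ dist y c ≤ ρ₀ / R ^ n / 2 ∧ good n y) :
    ∃ g : (ℕ → Fin N) → X, (∀ ω, g ω ∈ Ω) ∧
      (∀ ω n, ∃ y, good n y ∧ dist y (g ω) ≤ ρ₀ / R ^ (n + 1)) ∧
      ∀ ω ω' n, (∀ k < n, ω k = ω' k) → ω n ≠ ω' n → ρ₀ / R ^ (n + 1) ≤ dist (g ω) (g ω') := by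
  obtain ⟨c₀, hc₀⟩ := hne
  have hfun : ∀ n (c : Ω), ∃ f : Fin N → Ω, ∀ i, dist (f i : X) c ≤ ρ₀ / R ^ n / 2 ∧
      good n (f i) ∧ ∀ j, i ≠ j → 3 * (ρ₀ / R ^ (n + 1)) ≤ dist (f i : X) (f j) := by
    intro n c
    obtain ⟨S, hN, hsep, hS⟩ := hchildren n c c.2
    set e : Fin N → S := fun i => S.equivFin.symm (Fin.castLE hN i)
    have he : Injective e := S.equivFin.symm.injective.comp (Fin.castLE_injective hN)
    refine ⟨fun i => ⟨e i, (hS _ (e i).2).1⟩, fun i => ⟨(hS _ (e i).2).2.1, (hS _ (e i).2).2.2,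
      fun j hij => hsep (e i).2 (e j).2 fun h => hij (he (Subtype.ext h))⟩⟩
  choose child hchild using hfun
  set center : (ℕ → Fin N) → ℕ → Ω := fun ω n => Nat.rec ⟨c₀, hc₀⟩ (fun k c => child k c (ω k)) n
  have center_succ : ∀ ω n, center ω (n + 1) = child n (center ω n) (ω n) := fun _ _ => rfl
  have center_congr : ∀ ω ω' n, (∀ k < n, ω k = ω' k) → center ω n = center ω' n := by
    intro ω ω' n
    induction n with
    | zero => exact fun _ => rfl
    | succ n ih =>
      intro h
      rw [center_succ, center_succ, ih fun k hk => h k (by omega), h n (by omega)]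
  have hlim : ∀ ω, ∃ x, Tendsto (fun n => (center ω n : X)) atTop (𝓝 x) ∧
      ∀ n, dist (center ω n : X) x ≤ ρ₀ / R ^ n := fun ω =>
    exists_tendsto_of_dist_succ_le hR fun n => by
      rw [dist_comm, center_succ]; exact (hchild n _ _).1
  choose g hg_tendsto hg_dist using hlim
  refine ⟨g, fun ω => hΩ.mem_of_tendsto (hg_tendsto ω) (.of_forall fun n => (center ω n).2),
    fun ω n => ⟨center ω (n + 1), by rw [center_succ]; exact (hchild _ _ _).2.1,
      hg_dist ω (n + 1)⟩, fun ω ω' n hagree hne => ?_⟩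
  have hsep := (hchild n (center ω n) (ω n)).2.2 (ω' n) hne
  rw [← center_succ, center_congr ω ω' n hagree, ← center_succ] at hsep
  have := dist_triangle4 (center ω (n + 1) : X) (g ω) (g ω') (center ω' (n + 1))
  rw [dist_comm (g ω')] at this
  linarith [hg_dist ω (n + 1), hg_dist ω' (n + 1)]

theorem Metric.isSeparated_coe_iff {X : Type*} [PseudoMetricSpace X] {ε : ℝ≥0} {s : Set X} :
    IsSeparated ε s ↔ s.Pairwise fun y z => (ε : ℝ) < dist y z := by
  simp only [IsSeparated, edist_nndist, ENNReal.coe_lt_coe, ← NNReal.coe_lt_coe, coe_nndist]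

section AhlforsRegular

variable {X : Type*} [MetricSpace X] [MeasurableSpace X]

/-- Condition (A). -/
def IsAhlforsRegularOn (m : Measure X) (Ω : Set X) (δ a b r₀ : ℝ) : Prop :=
  ∀ c ∈ Ω, ∀ r : ℝ, 0 < r → r ≤ r₀ →
    ENNReal.ofReal (a * r ^ δ) ≤ m (closedBall c r) ∧
      m (closedBall c r) ≤ ENNReal.ofReal (b * r ^ δ)

variable [OpensMeasurableSpace X] {m : Measure X} {Ω : Set X} {δ a b r₀ r : ℝ} {c : X}

theorem IsAhlforsRegularOn.card_mul_le (hA : IsAhlforsRegularOn m Ω δ a b r₀) (hb : 0 < b)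
    (hc : c ∈ Ω) {ε : ℝ} (hε : 0 < ε) (hεr : ε ≤ r) (hr : 2 * r ≤ r₀) {P : Finset X}
    (hPΩ : ↑P ⊆ Ω ∩ closedBall c r) (hP : (P : Set X).Pairwise fun y z => ε ≤ dist y z) :
    P.card * (a * (ε / 3) ^ δ) ≤ b * (2 * r) ^ δ := by
  have hdisj : (P : Set X).PairwiseDisjoint fun y => closedBall y (ε / 3) :=
    fun y hy z hz hyz => closedBall_disjoint_closedBall (by linarith [hP hy hz hyz])
  have hsub : (⋃ y ∈ P, closedBall y (ε / 3)) ⊆ closedBall c (2 * r) :=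
    iUnion₂_subset fun y hy => closedBall_subset_closedBall' (by
      linarith [mem_closedBall.1 (hPΩ hy).2])
  have hball : ∀ y ∈ P, ENNReal.ofReal (a * (ε / 3) ^ δ) ≤ m (closedBall y (ε / 3)) :=
    fun y hy => (hA y (hPΩ hy).1 _ (by positivity) (by linarith)).1
  have : ENNReal.ofReal (P.card * (a * (ε / 3) ^ δ)) ≤ ENNReal.ofReal (b * (2 * r) ^ δ) :=
    calc ENNReal.ofReal (P.card * (a * (ε / 3) ^ δ))
        ≤ ∑ y ∈ P, ENNReal.ofReal (a * (ε / 3) ^ δ) := by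
          rw [Finset.sum_const, nsmul_eq_mul, ENNReal.ofReal_mul (Nat.cast_nonneg _),
            ENNReal.ofReal_natCast]
      _ ≤ ∑ y ∈ P, m (closedBall y (ε / 3)) := Finset.sum_le_sum hball
      _ = m (⋃ y ∈ P, closedBall y (ε / 3)) :=
          (measure_biUnion_finset hdisj fun _ _ => measurableSet_closedBall).symm
      _ ≤ m (closedBall c (2 * r)) := measure_mono hsub
      _ ≤ ENNReal.ofReal (b * (2 * r) ^ δ) := (hA c hc _ (by linarith) hr).2
  have hr0 : 0 < r := hε.trans_le hεr
  exact (ENNReal.ofReal_le_ofReal_iff (by positivity)).1 this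

theorem IsAhlforsRegularOn.packingNumber_ne_top (hA : IsAhlforsRegularOn m Ω δ a b r₀)
    (ha : 0 < a) (hb : 0 < b) (hc : c ∈ Ω) {ε : ℝ≥0} (hε : 0 < ε) (hεr : (ε : ℝ) ≤ r)
    (hr : 2 * r ≤ r₀) : packingNumber ε (Ω ∩ closedBall c r) ≠ ⊤ := by
  set K : ℕ := ⌊b * (2 * r) ^ δ / (a * (ε / 3) ^ δ)⌋₊
  refine ne_top_of_le_ne_top (ENat.natCast_ne_top K) (iSup₂_le fun C hC => iSup_le fun hsep => ?_)
  by_contra! hK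
  obtain ⟨D, hDC, hD⟩ := Set.exists_subset_encard_eq (Order.add_one_le_of_lt hK)
  have hDfin : D.Finite := Set.finite_of_encard_eq_coe (k := K + 1) (by rw [hD]; norm_cast)
  have hcard : hDfin.toFinset.card = K + 1 := by
    rw [← Set.ncard_eq_toFinset_card D hDfin, Set.ncard_def, hD]; rfl
  have hP : ((hDfin.toFinset : Set X)).Pairwise fun y z => (ε : ℝ) ≤ dist y z := by
    rw [Set.Finite.coe_toFinset]
    exact (Metric.isSeparated_coe_iff.1 (hsep.subset hDC)).mono' fun _ _ => le_of_lt
  have := hA.card_mul_le hb hc (by exact_mod_cast hε) hεr hr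
    (by rw [Set.Finite.coe_toFinset]; exact hDC.trans hC) hP
  rw [hcard, ← le_div_iff₀ (by positivity)] at this
  exact (Nat.lt_floor_add_one _).not_ge (by exact_mod_cast this)

theorem IsAhlforsRegularOn.exists_finset_separated (hA : IsAhlforsRegularOn m Ω δ a b r₀)
    (hmΩ : m Ωᶜ = 0) (ha : 0 < a) (hb : 0 < b) (hc : c ∈ Ω) {ε : ℝ} (hε : 0 < ε) (hεr : ε ≤ r)
    (hr : 2 * r ≤ r₀) :
    ∃ P : Finset X, ↑P ⊆ Ω ∩ closedBall c r ∧ (P : Set X).Pairwise (fun y z => ε < dist y z) ∧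
      a / b * (r / ε) ^ δ ≤ P.card := by
  set ε' : ℝ≥0 := ⟨ε, hε.le⟩
  have htop := hA.packingNumber_ne_top ha hb hc (ε := ε') hε hεr hr
  set S := maximalSeparatedSet ε' (Ω ∩ closedBall c r)
  have hSfin : S.Finite := Set.encard_ne_top_iff.1 (by rwa [encard_maximalSeparatedSet htop])
  obtain ⟨P, hPS⟩ := hSfin.exists_finset_coe
  have hPsub : ↑P ⊆ Ω ∩ closedBall c r := hPS ▸ maximalSeparatedSet_subset
  refine ⟨P, hPsub, hPS ▸ Metric.isSeparated_coe_iff.1 isSeparated_maximalSeparatedSet, ?_⟩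
  have hcover : Ω ∩ closedBall c r ⊆ ⋃ y ∈ P, closedBall y ε := by
    rw [← Finset.set_biUnion_coe, hPS]
    exact isCover_iff_subset_iUnion_closedBall.1 (isCover_maximalSeparatedSet htop)
  have hsub : closedBall c r ⊆ (⋃ y ∈ P, closedBall y ε) ∪ Ωᶜ := fun x hx => by
    by_cases hxΩ : x ∈ Ω
    · exact Or.inl (hcover ⟨hxΩ, hx⟩)
    · exact Or.inr hxΩ
  have : ENNReal.ofReal (a * r ^ δ) ≤ ENNReal.ofReal (P.card * (b * ε ^ δ)) :=
    calc ENNReal.ofReal (a * r ^ δ)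
        ≤ m (closedBall c r) := (hA c hc r (by linarith) (by linarith)).1
      _ ≤ m (⋃ y ∈ P, closedBall y ε) + m Ωᶜ :=
          (measure_mono hsub).trans (measure_union_le _ _)
      _ ≤ ∑ y ∈ P, m (closedBall y ε) := by
          rw [hmΩ, add_zero]; exact measure_biUnion_finset_le _ _
      _ ≤ ∑ y ∈ P, ENNReal.ofReal (b * ε ^ δ) := Finset.sum_le_sum fun y hy =>
          (hA y (hPsub hy).1 ε hε (by linarith)).2
      _ = ENNReal.ofReal (P.card * (b * ε ^ δ)) := by
          rw [Finset.sum_const, nsmul_eq_mul, ENNReal.ofReal_mul (Nat.cast_nonneg _),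
            ENNReal.ofReal_natCast]
  rw [ENNReal.ofReal_le_ofReal_iff (by positivity)] at this
  rw [Real.div_rpow (by linarith) hε.le, div_mul_div_comm, div_le_iff₀ (by positivity)]
  linarith

end AhlforsRegular

theorem Collinear.exists_isometry {E : Type*} [NormedAddCommGroup E] [NormedSpace ℝ E]
    [Nontrivial E] {s : Set E} (hs : Collinear ℝ s) {x : E} (hx : x ∈ s) :
    ∃ φ : ℝ → E, Isometry φ ∧ φ 0 = x ∧ s ⊆ range φ := by
  obtain ⟨v, hv⟩ := (collinear_iff_of_mem hx).1 hs
  obtain ⟨u, hu, hvu⟩ : ∃ u : E, ‖u‖ = 1 ∧ v = ‖v‖ • u := by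
    rcases eq_or_ne v 0 with rfl | hv0
    · obtain ⟨u, hu⟩ := exists_norm_eq E zero_le_one
      exact ⟨u, hu, by simp⟩
    · refine ⟨‖v‖⁻¹ • v, by simp [norm_smul, hv0], ?_⟩
      rw [smul_inv_smul₀ (norm_ne_zero_iff.2 hv0)]
  refine ⟨fun t => t • u + x, Isometry.of_dist_eq fun t t' => ?_, by simp, fun y hy => ?_⟩
  · rw [dist_add_right, dist_eq_norm, ← sub_smul, norm_smul, hu, mul_one, Real.norm_eq_abs,
      Real.dist_eq]
  · obtain ⟨t, rfl⟩ := hv y hy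
    exact ⟨t * ‖v‖, by rw [vadd_eq_add, hvu, smul_smul, norm_smul, norm_norm, hu, mul_one]⟩

theorem Finset.card_le_of_near_isometry {X : Type*} [PseudoMetricSpace X] {φ : ℝ → X}
    (hφ : Isometry φ) {d : ℝ} (hd : 0 < d) {M : ℕ} {P : Finset X}
    (hP : (P : Set X).Pairwise fun y z => 3 * d ≤ dist y z)
    (hnear : ∀ y ∈ P, ∃ t, |t| ≤ M * d ∧ dist y (φ t) ≤ d) : P.card ≤ 2 * M + 1 := by
  choose! t ht hyt using hnear
  have hmaps : ∀ y ∈ P, ⌊t y / d⌋ ∈ Finset.Icc (-(M : ℤ)) M := fun y hy => by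
    have h : |t y / d| ≤ M := by
      rw [abs_div, abs_of_pos hd, div_le_iff₀ hd]
      exact ht y hy
    rw [abs_le] at h
    exact Finset.mem_Icc.2 ⟨Int.le_floor.2 (by push_cast; linarith),
      (Int.floor_mono h.2).trans_eq (Int.floor_natCast M)⟩
  have hinj : Set.InjOn (fun y => ⌊t y / d⌋) P := fun y hy z hz hyz => by
    by_contra hne
    have hlt : |t y - t z| < d := by
      have := Int.abs_sub_lt_one_of_floor_eq_floor hyz
      rwa [← sub_div, abs_div, abs_of_pos hd, div_lt_one hd] at this
    have hsep : 3 * d ≤ dist y z := hP hy hz hne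
    have := dist_triangle4 y (φ (t y)) (φ (t z)) z
    rw [hφ.dist_eq, Real.dist_eq, dist_comm (φ (t z)) z] at this
    linarith [hyt y hy, hyt z hz]
  calc P.card ≤ (Finset.Icc (-(M : ℤ)) M).card := Finset.card_le_card_of_injOn _ hmaps hinj
    _ = 2 * M + 1 := by simp only [Int.card_Icc]; omega

noncomputable def ratPt (p : Fin 2 → ℤ) (q : ℕ) : Fin 2 → ℝ := fun k => p k / q

def cross (u v : Fin 2 → ℝ) : ℝ := u 0 * v 1 - u 1 * v 0

theorem abs_cross_le (u v : Fin 2 → ℝ) : |cross u v| ≤ 2 * (‖u‖ * ‖v‖) := by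
  have h : ∀ k l, |u k * v l| ≤ ‖u‖ * ‖v‖ := fun k l => by
    rw [abs_mul]
    exact mul_le_mul (norm_le_pi_norm u k) (norm_le_pi_norm v l) (abs_nonneg _) (norm_nonneg _)
  calc |cross u v| ≤ |u 0 * v 1| + |u 1 * v 0| := abs_sub _ _
    _ ≤ 2 * (‖u‖ * ‖v‖) := by linarith [h 0 1, h 1 0]

/-- Clearing denominators turns the cross product into a nonzero integer. -/
theorem one_le_abs_cross_mul {pA pB pC : Fin 2 → ℤ} {qA qB qC : ℕ}
    (hA : 0 < qA) (hB : 0 < qB) (hC : 0 < qC)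
    (hne : cross (ratPt pB qB - ratPt pA qA) (ratPt pC qC - ratPt pA qA) ≠ 0) :
    1 ≤ |cross (ratPt pB qB - ratPt pA qA) (ratPt pC qC - ratPt pA qA)| * (qA * qB * qC) := by
  set M : ℤ := qA * (pB 0 * pC 1 - pB 1 * pC 0) + qB * (pC 0 * pA 1 - pC 1 * pA 0)
    + qC * (pA 0 * pB 1 - pA 1 * pB 0)
  have hM : cross (ratPt pB qB - ratPt pA qA) (ratPt pC qC - ratPt pA qA) * (qA * qB * qC) = M := by
    simp only [cross, ratPt, Pi.sub_apply, M]
    push_cast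
    field_simp
    ring
  have hq : (0 : ℝ) < qA * qB * qC := by positivity
  have hM0 : M ≠ 0 := by
    rintro h
    rw [h, Int.cast_zero, mul_eq_zero] at hM
    exact hM.elim hne hq.ne'
  rw [← abs_of_pos hq, ← abs_mul, hM]
  exact_mod_cast Int.one_le_abs hM0

theorem collinear_of_cross_eq_zero {s : Set (Fin 2 → ℝ)}
    (h : ∀ A ∈ s, ∀ B ∈ s, ∀ C ∈ s, cross (B - A) (C - A) = 0) : Collinear ℝ s := by
  rcases s.eq_empty_or_nonempty with rfl | ⟨A, hA⟩
  · exact collinear_empty ℝ _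
  by_cases hsub : s ⊆ {A}
  · exact (collinear_singleton ℝ A).subset hsub
  obtain ⟨B, hB, hBA⟩ := Set.not_subset.1 hsub
  rw [collinear_iff_of_mem hA]
  have hv : B - A ≠ 0 := sub_ne_zero.2 hBA
  refine ⟨B - A, fun C hC => ?_⟩
  have hcross := h A hA B hB C hC
  simp only [cross, Pi.sub_apply] at hcross
  obtain ⟨k, hk⟩ : ∃ k, (B - A) k ≠ 0 := by
    by_contra! h0
    exact hv (funext h0)
  have key : ∀ k l, (C l - A l) * (B k - A k) = (C k - A k) * (B l - A l) := by
    refine Fin.forall_fin_two.2 ⟨Fin.forall_fin_two.2 ⟨rfl, ?_⟩, Fin.forall_fin_two.2 ⟨?_, rfl⟩⟩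
    · linear_combination hcross
    · linear_combination -hcross
  refine ⟨(C k - A k) / (B k - A k), funext fun l => ?_⟩
  simp only [Pi.sub_apply] at hk
  rw [vadd_eq_add, Pi.add_apply, Pi.smul_apply, smul_eq_mul, Pi.sub_apply, div_mul_eq_mul_div,
    ← key k l, mul_div_cancel_right₀ _ hk, sub_add_cancel]

/-- Davenport's simplex lemma. -/
theorem collinear_of_subset_closedBall {s : Set (Fin 2 → ℝ)} {c : Fin 2 → ℝ} {r H : ℝ}
    (hs : ∀ z ∈ s, ∃ (p : Fin 2 → ℤ) (q : ℕ), 0 < q ∧ (q : ℝ) ^ 3 ≤ H ^ 2 ∧ z = ratPt p q)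
    (hsr : s ⊆ closedBall c r) (h : 8 * r ^ 2 * H ^ 2 < 1) : Collinear ℝ s := by
  have hdiam : ∀ y ∈ s, ∀ z ∈ s, ‖z - y‖ ≤ 2 * r := fun y hy z hz => by
    rw [← dist_eq_norm, two_mul]
    exact (dist_triangle_right z y c).trans (add_le_add (hsr hz) (hsr hy))
  refine collinear_of_cross_eq_zero fun A hA B hB C hC => ?_
  by_contra hne
  have hcross : |cross (B - A) (C - A)| ≤ 8 * r ^ 2 := by
    have := abs_cross_le (B - A) (C - A)
    nlinarith [hdiam A hA B hB, hdiam A hA C hC, norm_nonneg (B - A), norm_nonneg (C - A)]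
  obtain ⟨pA, qA, hqA, hHA, rfl⟩ := hs A hA
  obtain ⟨pB, qB, hqB, hHB, rfl⟩ := hs B hB
  obtain ⟨pC, qC, hqC, hHC, rfl⟩ := hs C hC
  have hq : (qA * qB * qC : ℝ) ≤ H ^ 2 := by
    refine (pow_le_pow_iff_left₀ (by positivity) (by positivity) three_ne_zero).1 ?_
    rw [mul_pow, mul_pow, ← pow_mul]
    calc (qA : ℝ) ^ 3 * qB ^ 3 * qC ^ 3 ≤ H ^ 2 * H ^ 2 * H ^ 2 := by gcongr
      _ = H ^ (2 * 3) := by ring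
  have := one_le_abs_cross_mul hqA hqB hqC hne
  nlinarith [abs_nonneg (cross (ratPt pB qB - ratPt pA qA) (ratPt pC qC - ratPt pA qA))]

theorem mem_badPair_half_of_lt_dist {x : Fin 2 → ℝ} {κ : ℝ} (hκ : 0 < κ)
    (hx : ∀ (p : Fin 2 → ℤ) (q : ℕ), 0 < q → κ / (q * √q) < dist x (ratPt p q)) :
    x ∈ badPair (1 / 2) (1 / 2) := by
  refine ⟨κ ^ 2, by positivity, fun q hq => ?_⟩
  have hq' : (0 : ℝ) < q := by exact_mod_cast hq
  obtain ⟨k, hk⟩ : ∃ k, κ / (q * √q) < dist (x k) (ratPt (fun k => round (q * x k)) q k) := by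
    by_contra! h
    exact (hx _ q hq).not_ge ((dist_pi_le_iff (by positivity)).2 h)
  have hdist : dist (x k) (ratPt (fun k => round (q * x k)) q k) =
      distToNearestInt (q * x k) / q := by
    rw [Real.dist_eq, ratPt, distToNearestInt, ← abs_of_pos hq', ← abs_div, abs_of_pos hq']
    congr 1
    field_simp
  rw [hdist, mul_comm, ← div_div, div_lt_div_iff_of_pos_right hq'] at hk
  have : κ ^ 2 / q < distToNearestInt (q * x k) ^ ((1 : ℝ) / (1 / 2)) := by
    rw [show (1 : ℝ) / (1 / 2) = (2 : ℕ) by norm_num, Real.rpow_natCast]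
    calc κ ^ 2 / q = (κ / √q) ^ 2 := by rw [div_pow, Real.sq_sqrt hq'.le]
      _ < _ := by gcongr
  fin_cases k
  · exact Or.inl ⟨by norm_num, this⟩
  · exact Or.inr ⟨by norm_num, this⟩

/-- Generation `n` of the construction removes the neighbourhoods of radius `κ q^(-3/2)` of the
rational points `p / q` for which this radius lies in `(ρ₀ R^(-n-2), ρ₀ R^(-n-1)]`; the extra margin
`ρ₀ R^(-n-1)` absorbs every later step of the construction. -/
def AvoidsGeneration (κ ρ₀ : ℝ) (R n : ℕ) (y : Fin 2 → ℝ) : Prop :=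
  ∀ (p : Fin 2 → ℤ) (q : ℕ), 0 < q → ρ₀ / R ^ (n + 2) < κ / (q * √q) →
    κ / (q * √q) ≤ ρ₀ / R ^ (n + 1) → ρ₀ / R ^ (n + 1) + κ / (q * √q) < dist y (ratPt p q)

theorem cube_le_sq_of_div_lt {κ ρ₀ X : ℝ} (hρ₀ : 0 < ρ₀) (hX : 0 < X) {q : ℕ} (hq : 0 < q)
    (h : ρ₀ / X < κ / (q * √q)) : (q : ℝ) ^ 3 ≤ (κ * X / ρ₀) ^ 2 := by
  have hq' : (0 : ℝ) < q := by exact_mod_cast hq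
  rw [div_lt_div_iff₀ hX (by positivity), ← lt_div_iff₀' hρ₀] at h
  calc (q : ℝ) ^ 3 = (q * √q) ^ 2 := by rw [mul_pow, Real.sq_sqrt hq'.le]; ring
    _ ≤ (κ * X / ρ₀) ^ 2 := by gcongr

theorem exists_ratPt_near_of_not_avoidsGeneration {κ ρ₀ : ℝ} {R n : ℕ} (hρ₀ : 0 < ρ₀)
    (hR : 0 < R) {y : Fin 2 → ℝ} (hy : ¬ AvoidsGeneration κ ρ₀ R n y) :
    ∃ (p : Fin 2 → ℤ) (q : ℕ), 0 < q ∧ (q : ℝ) ^ 3 ≤ (κ * R ^ (n + 2) / ρ₀) ^ 2 ∧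
      dist y (ratPt p q) ≤ 2 * (ρ₀ / R ^ (n + 1)) := by
  simp only [AvoidsGeneration, not_forall, not_lt] at hy
  obtain ⟨p, q, hq, hlow, hhigh, hdist⟩ := hy
  exact ⟨p, q, hq, cube_le_sq_of_div_lt hρ₀ (by positivity) hq hlow, by linarith⟩

theorem card_le_of_not_avoidsGeneration {κ ρ₀ : ℝ} {R : ℕ} (hρ₀ : 0 < ρ₀) (hR : 12 ≤ R)
    (hκ : 8 * κ ^ 2 * R ^ 4 < 1) {n : ℕ} {c : Fin 2 → ℝ} {P : Finset (Fin 2 → ℝ)}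
    (hPc : ↑P ⊆ closedBall c (ρ₀ / R ^ n / 2))
    (hP : (P : Set (Fin 2 → ℝ)).Pairwise fun y z => 6 * (ρ₀ / R ^ (n + 1)) ≤ dist y z)
    (hPn : ∀ y ∈ P, ¬ AvoidsGeneration κ ρ₀ R n y) : P.card ≤ 2 * R + 1 := by
  set ρ := ρ₀ / R ^ n
  set ρ' := ρ₀ / R ^ (n + 1)
  have hR' : (12 : ℝ) ≤ R := by exact_mod_cast hR
  have hρ : 0 < ρ := by positivity
  have hρρ' : ρ = R * ρ' := by
    simp only [ρ, ρ', pow_succ]; field_simp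
  -- `hκ` is the hypothesis of the simplex lemma at radius `ρ` and height `H`.
  set H := κ * R ^ (n + 2) / ρ₀
  set D := {z ∈ closedBall c ρ | ∃ (p : Fin 2 → ℤ) (q : ℕ), 0 < q ∧ (q : ℝ) ^ 3 ≤ H ^ 2 ∧
    z = ratPt p q}
  have hD : Collinear ℝ D := by
    refine collinear_of_subset_closedBall (c := c) (r := ρ) (fun z hz => hz.2)
      (fun z hz => hz.1) ?_
    calc 8 * ρ ^ 2 * H ^ 2 = 8 * κ ^ 2 * R ^ 4 := by
          simp only [ρ, H]; field_simp; ring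
      _ < 1 := hκ
  have hnear : ∀ y ∈ P, ∃ z ∈ D, dist y z ≤ 2 * ρ' := by
    intro y hyP
    obtain ⟨p, q, hq, hH, hyz⟩ :=
      exists_ratPt_near_of_not_avoidsGeneration hρ₀ (by omega) (hPn y hyP)
    refine ⟨ratPt p q, ⟨?_, p, q, hq, hH, rfl⟩, hyz⟩
    have hρ' : 0 < ρ' := by positivity
    calc dist (ratPt p q) c ≤ dist y (ratPt p q) + dist y c := dist_triangle_left _ _ _
      _ ≤ 2 * ρ' + ρ / 2 := add_le_add hyz (hPc hyP)
      _ ≤ ρ := by rw [hρρ']; nlinarith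
  rcases P.eq_empty_or_nonempty with h | ⟨y₀, hy₀⟩
  · simp [h]
  obtain ⟨z₀, hz₀, -⟩ := hnear y₀ hy₀
  obtain ⟨φ, hφ, hφ0, hDφ⟩ := hD.exists_isometry hz₀
  refine Finset.card_le_of_near_isometry hφ (d := 2 * ρ') (by positivity)
    (fun y hy z hz hyz => by linarith [hP hy hz hyz]) fun y hy => ?_
  obtain ⟨z, hz, hyz⟩ := hnear y hy
  obtain ⟨t, rfl⟩ := hDφ hz
  refine ⟨t, ?_, hyz⟩
  calc |t| = dist (φ t) (φ 0) := by rw [hφ.dist_eq, Real.dist_eq, sub_zero]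
    _ ≤ dist (φ t) c + dist (φ 0) c := dist_triangle_right _ _ _
    _ ≤ ρ + ρ := add_le_add hz.1 (hφ0 ▸ hz₀.1)
    _ = R * (2 * ρ') := by rw [hρρ']; ring

theorem IsAhlforsRegularOn.exists_children {m : Measure (Fin 2 → ℝ)} {Ω : Set (Fin 2 → ℝ)}
    {δ a b r₀ ρ₀ κ : ℝ} {R : ℕ} (hA : IsAhlforsRegularOn m Ω δ a b r₀) (hmΩ : m Ωᶜ = 0)
    (ha : 0 < a) (hb : 0 < b) (hρ₀ : 0 < ρ₀) (hρ₀r₀ : ρ₀ ≤ r₀) (hR : 12 ≤ R)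
    (hκ : 8 * κ ^ 2 * R ^ 4 < 1) (n : ℕ) {c : Fin 2 → ℝ} (hc : c ∈ Ω) :
    ∃ S : Finset (Fin 2 → ℝ), a / b * (R / 12) ^ δ ≤ S.card + (2 * R + 1) ∧
      (S : Set (Fin 2 → ℝ)).Pairwise (fun y z => 6 * (ρ₀ / R ^ (n + 1)) < dist y z) ∧
      ∀ y ∈ S, y ∈ Ω ∧ dist y c ≤ ρ₀ / R ^ n / 2 ∧ AvoidsGeneration κ ρ₀ R n y := by
  classical
  have hR' : (12 : ℝ) ≤ R := by exact_mod_cast hR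
  have hR1 : (1 : ℝ) ≤ R ^ n := one_le_pow₀ (by linarith)
  obtain ⟨P, hPsub, hPsep, hPcard⟩ := hA.exists_finset_separated hmΩ ha hb hc
    (r := ρ₀ / R ^ n / 2) (ε := 6 * (ρ₀ / R ^ (n + 1))) (by positivity)
    (by
      rw [pow_succ, ← div_div]
      calc 6 * (ρ₀ / R ^ n / R) ≤ 6 * (ρ₀ / R ^ n / 12) := by gcongr
        _ ≤ ρ₀ / R ^ n / 2 := by linarith [show 0 < ρ₀ / R ^ n by positivity])
    (by rw [mul_div_cancel₀ _ two_ne_zero]; exact (div_le_self hρ₀.le hR1).trans hρ₀r₀)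
  rw [show ρ₀ / R ^ n / 2 / (6 * (ρ₀ / R ^ (n + 1))) = R / 12 by
    rw [pow_succ]; field_simp; ring] at hPcard
  have hkilled := card_le_of_not_avoidsGeneration hρ₀ hR hκ
    (P := P.filter fun y => ¬ AvoidsGeneration κ ρ₀ R n y)
    (fun y hy => (hPsub (Finset.mem_filter.1 hy).1).2)
    (fun y hy z hz hyz => (hPsep (Finset.mem_filter.1 hy).1 (Finset.mem_filter.1 hz).1 hyz).le)
    fun y hy => (Finset.mem_filter.1 hy).2
  refine ⟨P.filter (AvoidsGeneration κ ρ₀ R n), ?_,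
    hPsep.mono (Finset.coe_subset.2 (Finset.filter_subset _ _)), fun y hy => ?_⟩
  · have := Finset.card_filter_add_card_filter_not (s := P) (AvoidsGeneration κ ρ₀ R n)
    have : (P.card : ℝ) ≤ (P.filter (AvoidsGeneration κ ρ₀ R n)).card + (2 * R + 1) := by
      exact_mod_cast (by omega : P.card ≤ _)
    linarith
  · obtain ⟨hyP, hyA⟩ := Finset.mem_filter.1 hy
    exact ⟨(hPsub hyP).1, (hPsub hyP).2, hyA⟩

theorem exists_div_pow_lt_le {ρ₀ r R : ℝ} (hR : 1 < R) (hr : 0 < r) (hrρ : r ≤ ρ₀ / R) :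
    ∃ n : ℕ, ρ₀ / R ^ (n + 2) < r ∧ r ≤ ρ₀ / R ^ (n + 1) := by
  have hR0 : 0 < R := by linarith
  have hx : 1 ≤ ρ₀ / (R * r) := by
    rwa [le_div_iff₀ (by positivity), one_mul, ← le_div_iff₀' hR0]
  obtain ⟨n, h1, h2⟩ := exists_nat_pow_near hx hR
  rw [le_div_iff₀ (by positivity)] at h1
  rw [div_lt_iff₀ (by positivity)] at h2
  refine ⟨n, (div_lt_iff₀ (by positivity)).2 ?_, (le_div_iff₀ (by positivity)).2 ?_⟩
  · calc ρ₀ < R ^ (n + 1) * (R * r) := h2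
      _ = r * R ^ (n + 2) := by ring
  · calc r * R ^ (n + 1) = R ^ n * (R * r) := by ring
      _ ≤ ρ₀ := h1

theorem lt_dist_ratPt_of_avoidsGeneration {κ ρ₀ : ℝ} {R : ℕ} (hR : 2 ≤ R) (hκ : 0 < κ)
    (hκρ₀ : κ ≤ ρ₀ / R) {x : Fin 2 → ℝ}
    (hx : ∀ n, ∃ y, AvoidsGeneration κ ρ₀ R n y ∧ dist y x ≤ ρ₀ / R ^ (n + 1))
    (p : Fin 2 → ℤ) {q : ℕ} (hq : 0 < q) : κ / (q * √q) < dist x (ratPt p q) := by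
  have hq1 : (1 : ℝ) ≤ q * √q := one_le_mul_of_one_le_of_one_le (by exact_mod_cast hq)
    (Real.one_le_sqrt.2 (by exact_mod_cast hq))
  obtain ⟨n, hlow, hhigh⟩ := exists_div_pow_lt_le (R := R) (by exact_mod_cast hR)
    (div_pos hκ (by linarith)) ((div_le_self hκ.le hq1).trans hκρ₀)
  obtain ⟨y, hy, hyx⟩ := hx n
  linarith [hy p q hq hlow hhigh, dist_triangle y x (ratPt p q)]

theorem exists_nat_ceil_rpow_add_le {a b s δ : ℝ} (ha : 0 < a) (hb : 0 < b) (hs : 1 ≤ s)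
    (hsδ : s < δ) :
    ∃ R : ℕ, 12 ≤ R ∧ (⌈(R : ℝ) ^ s⌉₊ : ℝ) + (2 * R + 1) ≤ a / b * (R / 12) ^ δ := by
  have hlim : Tendsto (fun R : ℕ => (R : ℝ) ^ (δ - s)) atTop atTop :=
    (tendsto_rpow_atTop (sub_pos.2 hsδ)).comp tendsto_natCast_atTop_atTop
  obtain ⟨R, hR, hRlarge⟩ :=
    ((eventually_ge_atTop 12).and (hlim.eventually_ge_atTop (5 * b * 12 ^ δ / a))).exists
  refine ⟨R, hR, ?_⟩
  have hR' : (12 : ℝ) ≤ R := by exact_mod_cast hR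
  have hR0 : (0 : ℝ) < R := by linarith
  have hRs : (R : ℝ) ≤ R ^ s := by
    simpa using Real.rpow_le_rpow_of_exponent_le (by exact_mod_cast (by omega : 1 ≤ R)) hs
  calc (⌈(R : ℝ) ^ s⌉₊ : ℝ) + (2 * R + 1) ≤ (R ^ s + 1) + (2 * R + 1) := by
        gcongr; exact (Nat.ceil_lt_add_one (by positivity)).le
    _ ≤ a / (b * 12 ^ δ) * R ^ s * (5 * b * 12 ^ δ / a) := by
        field_simp; linarith
    _ ≤ a / (b * 12 ^ δ) * R ^ s * R ^ (δ - s) := by gcongr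
    _ = a / b * (R / 12) ^ δ := by
        rw [mul_assoc, ← Real.rpow_add hR0, add_sub_cancel, Real.div_rpow hR0.le (by norm_num)]
        ring

theorem IsAhlforsRegularOn.exists_subset_badPair_half_ofReal_le_dimH {m : Measure (Fin 2 → ℝ)}
    {Ω : Set (Fin 2 → ℝ)} {δ a b r₀ : ℝ} (hA : IsAhlforsRegularOn m Ω δ a b r₀) (hmΩ : m Ωᶜ = 0)
    (hΩ : IsClosed Ω) (hne : Ω.Nonempty) (ha : 0 < a) (hb : 0 < b) (hr₀ : 0 < r₀) {s : ℝ}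
    (hs : 1 ≤ s) (hsδ : s < δ) :
    ∃ K ⊆ Ω, K ⊆ badPair (1 / 2) (1 / 2) ∧ ENNReal.ofReal s ≤ dimH K := by
  obtain ⟨R, hR, hRN⟩ := exists_nat_ceil_rpow_add_le ha hb hs hsδ
  have hR' : (12 : ℝ) ≤ R := by exact_mod_cast hR
  set ρ₀ := min r₀ 1
  have hρ₀ : 0 < ρ₀ := lt_min hr₀ one_pos
  set κ := ρ₀ / R ^ 3
  have hκ : 8 * κ ^ 2 * R ^ 4 < 1 := by
    have : ρ₀ ^ 2 ≤ 1 := pow_le_one₀ hρ₀.le (min_le_right _ _)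
    calc 8 * κ ^ 2 * R ^ 4 = 8 * ρ₀ ^ 2 / R ^ 2 := by simp only [κ]; field_simp
      _ < 1 := by rw [div_lt_one (by positivity)]; nlinarith
  obtain ⟨g, hgΩ, hgavoid, hgsep⟩ := exists_cantor_scheme hΩ hne (R := R) (by linarith)
    (N := ⌈(R : ℝ) ^ s⌉₊) (AvoidsGeneration κ ρ₀ R) fun n c hc => by
      obtain ⟨S, hS, hsep, hSΩ⟩ := hA.exists_children hmΩ ha hb hρ₀ (min_le_left _ _) hR hκ n hc
      refine ⟨S, by exact_mod_cast (by linarith : (⌈(R : ℝ) ^ s⌉₊ : ℝ) ≤ S.card),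
        hsep.mono' fun y z h => ?_, hSΩ⟩
      linarith [show 0 < ρ₀ / R ^ (n + 1) by positivity]
  refine ⟨range g, range_subset_iff.2 hgΩ, ?_, ?_⟩
  · rintro _ ⟨ω, rfl⟩
    refine mem_badPair_half_of_lt_dist (κ := κ) (by positivity) fun p q hq =>
      lt_dist_ratPt_of_avoidsGeneration (by omega) (by positivity) ?_ (hgavoid ω) p hq
    rw [div_le_div_iff_of_pos_left hρ₀ (by positivity) (by positivity)]
    exact le_self_pow₀ (by linarith) (by norm_num)
  · refine le_dimH_range_of_le_dist (R := R) (c := ρ₀ / R) (by linarith) (by positivity)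
      (by linarith) (Nat.le_ceil _) fun ω ω' n h1 h2 => ?_
    rw [div_div, ← pow_succ']
    exact hgsep ω ω' n h1 h2

theorem dimH_badPair_inter_symmetric_ge_general (i j : ℝ)
    (Ω : Set (Fin 2 → ℝ)) (hΩc : IsCompact Ω) (hΩsub : Ω ⊆ badPair i j)
    (m : Measure (Fin 2 → ℝ))
    (hm0 : m ≠ 0) (hmΩ : m Ωᶜ = 0)
    (δ a b r₀ : ℝ) (hδ : 1 < δ) (ha : 0 < a) (hb : 1 ≤ b) (hr₀ : 0 < r₀)
    (hA : ∀ c ∈ Ω, ∀ r : ℝ, 0 < r → r ≤ r₀ →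
      ENNReal.ofReal (a * r ^ δ) ≤ m (closedBall c r) ∧
      m (closedBall c r) ≤ ENNReal.ofReal (b * r ^ δ)) :
    ENNReal.ofReal δ ≤ dimH (badPair i j ∩ badPair (1/2) (1/2)) ∧
      (badPair i j ∩ badPair (1/2) (1/2)).Nonempty := by
  have hΩ : Ω.Nonempty := by
    by_contra! h
    rw [h, compl_empty, Measure.measure_univ_eq_zero] at hmΩ
    exact hm0 hmΩ
  have hdim : ENNReal.ofReal δ ≤ dimH (badPair i j ∩ badPair (1/2) (1/2)) := by
    refine le_of_tendsto ((ENNReal.continuous_ofReal.tendsto δ).mono_left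
      (nhdsWithin_le_nhds (s := Iio δ))) ?_
    filter_upwards [Ioo_mem_nhdsLT hδ] with s hs
    obtain ⟨K, hKΩ, hKbad, hK⟩ := IsAhlforsRegularOn.exists_subset_badPair_half_ofReal_le_dimH
      hA hmΩ hΩc.isClosed hΩ ha (by linarith) hr₀ hs.1.le hs.2
    exact hK.trans (dimH_mono (subset_inter (hKΩ.trans hΩsub) hKbad))
  refine ⟨hdim, nonempty_iff_ne_empty.2 fun h => ?_⟩
  rw [h, dimH_empty, nonpos_iff_eq_zero, ENNReal.ofReal_eq_zero] at hdim
  linarith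

/-- Let `i, j > 0` with `i + j = 1`. If there exists a compact subset `Ω ⊆ Bad(i,j) ⊆ ℝ²`
(with the sup metric) supporting a non-atomic finite measure `m` satisfying condition (A) with
exponent `δ > 1`, then `dim (Bad(i,j) ∩ Bad(1/2,1/2)) ≥ δ`; in particular
`Bad(i,j) ∩ Bad(1/2,1/2) ≠ ∅`. -/
theorem dimH_badPair_inter_symmetric_ge (i j : ℝ) (hi : 0 < i) (hj : 0 < j) (hij : i + j = 1)
    (Ω : Set (Fin 2 → ℝ)) (hΩc : IsCompact Ω) (hΩsub : Ω ⊆ badPair i j)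
    (m : Measure (Fin 2 → ℝ)) [IsFiniteMeasure m] [NullSingletonClass m]
    (hm0 : m ≠ 0) (hmΩ : m Ωᶜ = 0)
    (δ a b r₀ : ℝ) (hδ : 1 < δ) (ha : 0 < a) (ha1 : a ≤ 1) (hb : 1 ≤ b) (hr₀ : 0 < r₀)
    (hA : ∀ c ∈ Ω, ∀ r : ℝ, 0 < r → r ≤ r₀ →
      ENNReal.ofReal (a * r ^ δ) ≤ m (closedBall c r) ∧
      m (closedBall c r) ≤ ENNReal.ofReal (b * r ^ δ)) :
    ENNReal.ofReal δ ≤ dimH (badPair i j ∩ badPair (1/2) (1/2)) ∧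
      (badPair i j ∩ badPair (1/2) (1/2)).Nonempty :=
  dimH_badPair_inter_symmetric_ge_general i j Ω hΩc hΩsub m hm0 hmΩ δ a b r₀ hδ ha hb hr₀ hA
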